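/- Let A ∈ Mat_{n×n}(k) be a square matrix of index 1 over a field k, and let ν₁ = n − rank(A). Then the set of G-Drazin inverses of A is in bijection with k^{ν₁²}. -/

import Mathlib

/-!
Fix one G-Drazin inverse `G` of `A`. Then `X ↦ X - G` identifies the G-Drazin inverses with the
matrices `Y` satisfying `A * Y = 0 = Y * A`: commuting with `A` forces
`A * Y = A * G * A * Y = G * (A * Y * A) = 0`. These `Y` are exactly the maps `kⁿ → kⁿ` that kill
`range A` and land in `ker A`, i.e. `Hom(kⁿ ⧸ range A, ker A)`, a space of dimension `ν₁²`.

Index one is needed only to produce `G`: `rank A = rank A²` gives `A = A² * B` and, after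
transposing, `A = C * A²`; then `C * A * B` commutes with `A` and is an inner inverse of it.
-/

open Module Matrix LinearMap

def IsGDrazinInverse {R : Type*} [Mul R] (a x : R) : Prop :=
  a * x * a = a ∧ x * a = a * x

theorem isGDrazinInverse_mul_mul {S : Type*} [Semigroup S] {a b c : S}
    (hb : a * a * b = a) (hc : c * a * a = a) : IsGDrazinInverse a (c * a * b) := by
  have hab : a * b = c * a := by
    conv_lhs => rw [← hc]
    simp only [mul_assoc] at hb ⊢
    rw [hb]
  have haba : a * b * a = a := by rw [hab, hc]
  have hag : a * (c * a * b) = a * b := by rw [← hab, ← mul_assoc, ← mul_assoc, hb]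
  have hga : c * a * b * a = c * a := by rw [mul_assoc c, mul_assoc c, haba]
  exact ⟨by rw [hag, haba], by rw [hga, hag, hab]⟩

theorem IsGDrazinInverse.isGDrazinInverse_iff_mul_sub_eq_zero {R : Type*} [Ring R]
    {a g x : R}
    (hg : IsGDrazinInverse a g) :
    IsGDrazinInverse a x ↔ a * (x - g) = 0 ∧ (x - g) * a = 0 := by
  constructor
  · rintro ⟨hxa, hxc⟩
    have hcomm : (x - g) * a = a * (x - g) := by rw [sub_mul, mul_sub, hxc, hg.2]
    have hsandwich : a * (x - g) * a = 0 := by rw [mul_sub, sub_mul, hxa, hg.1, sub_self]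
    have hleft : a * (x - g) = 0 :=
      calc a * (x - g) = a * g * a * (x - g) := by rw [hg.1]
        _ = g * (a * (x - g) * a) := by rw [← hg.2]; simp only [mul_assoc, hcomm]
        _ = 0 := by rw [hsandwich, mul_zero]
    exact ⟨hleft, hcomm.trans hleft⟩
  · rintro ⟨hl, hr⟩
    rw [mul_sub, sub_eq_zero] at hl
    rw [sub_mul, sub_eq_zero] at hr
    exact ⟨by rw [hl, hg.1], by rw [hr, hl, hg.2]⟩

def IsGDrazinInverse.equivAnnihilator {R : Type*} [Ring R] {a g : R}
    (hg : IsGDrazinInverse a g) :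
    {x // IsGDrazinInverse a x} ≃ {y : R // a * y = 0 ∧ y * a = 0} :=
  (Equiv.subRight g).subtypeEquiv fun _ => hg.isGDrazinInverse_iff_mul_sub_eq_zero

theorem Matrix.exists_mul_eq_of_range_le {R m n o : Type*} [CommSemiring R] [Fintype n]
    [Fintype o]
    {A : Matrix m o R} {D : Matrix m n R} (h : range A.mulVecLin ≤ range D.mulVecLin) :
    ∃ B : Matrix n o R, D * B = A := by
  have hcol (j : o) : A.col j ∈ range D.mulVecLin :=
    h (range_mulVecLin A ▸ Submodule.subset_span ⟨j, rfl⟩)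
  choose b hb using hcol
  refine ⟨of fun i j => b j i, ?_⟩
  ext i j
  rw [mul_apply]
  simpa [mulVec, dotProduct] using congrFun (hb j) i

theorem Matrix.exists_mul_mul_eq_of_rank_mul_eq {K m n o : Type*} [Field K] [Fintype n] [Fintype o]
    {A : Matrix m n K} {B : Matrix n o K} (h : (A * B).rank = A.rank) :
    ∃ C : Matrix o n K, A * B * C = A := by
  refine exists_mul_eq_of_range_le (Submodule.eq_of_le_of_finrank_eq ?_ h).ge
  rw [mulVecLin_mul]
  exact range_comp_le_range _ _

theorem Matrix.exists_isGDrazinInverse_of_rank_eq_rank_sq {K n : Type*} [Field K] [Fintype n]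
    [DecidableEq n]
    {A : Matrix n n K} (h : A.rank = (A ^ 2).rank) : ∃ G, IsGDrazinInverse A G := by
  rw [sq] at h
  obtain ⟨B, hB⟩ := exists_mul_mul_eq_of_rank_mul_eq h.symm
  obtain ⟨C, hC⟩ := exists_mul_mul_eq_of_rank_mul_eq (A := Aᵀ) (B := Aᵀ) <| by
    rw [← transpose_mul, rank_transpose, rank_transpose, h]
  refine ⟨_, isGDrazinInverse_mul_mul hB (c := Cᵀ) ?_⟩
  simpa [transpose_mul, Matrix.mul_assoc] using congrArg transpose hC

def RingEquiv.annihilatorEquiv {R S : Type*} [NonUnitalNonAssocSemiring R]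
    [NonUnitalNonAssocSemiring S]
    (e : R ≃+* S) (a : R) :
    {y // a * y = 0 ∧ y * a = 0} ≃ {z // e a * z = 0 ∧ z * e a = 0} :=
  e.toEquiv.subtypeEquiv fun y => by
    simp only [RingEquiv.toEquiv_eq_coe, EquivLike.coe_coe, ← map_mul,
      map_eq_zero_iff e e.injective]

namespace Module.End
variable {R V : Type*} [Ring R] [AddCommGroup V] [Module R V]

def annihilatorEquivQuotientRangeToKer (f : Module.End R V) :
    {y : Module.End R V // f * y = 0 ∧ y * f = 0} ≃ ((V ⧸ range f) →ₗ[R] ker f) where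
  toFun y := (range f).liftQ (y.1.codRestrict (ker f) fun v => congr($(y.2.1) v))
    (by rintro _ ⟨v, rfl⟩; ext; exact congr($(y.2.2) v))
  invFun h := ⟨(ker f).subtype ∘ₗ h ∘ₗ (range f).mkQ, by
    constructor
    · ext v; exact (h _).2
    · ext v; simp [(Submodule.Quotient.mk_eq_zero _).2 (mem_range_self f v)]⟩
  left_inv y := by ext v; rfl
  right_inv h := by apply Submodule.linearMap_qext; ext v; rfl

theorem finrank_quotient_range_linearMap_ker {K : Type*} [Field K] [Module K V]
    [FiniteDimensional K V] (f : Module.End K V) :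
    finrank K ((V ⧸ range f) →ₗ[K] ker f) = (finrank K V - finrank K (range f)) ^ 2 := by
  have := f.finrank_range_add_finrank_ker
  rw [finrank_linearMap, Submodule.finrank_quotient, sq]
  congr 1
  omega

end Module.End

theorem stmt15_general {k : Type*} [Field k] {n : ℕ} (A : Matrix (Fin n) (Fin n) k)
    (h1 : A.rank = (A ^ 2).rank) :
    Nonempty
      ({X : Matrix (Fin n) (Fin n) k // A * X * A = A ∧ X * A = A * X} ≃
        (Fin (n - A.rank) × Fin (n - A.rank) → k)) := by
  obtain ⟨G, hG⟩ := Matrix.exists_isGDrazinInverse_of_rank_eq_rank_sq h1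
  have hdim : finrank k (((Fin n → k) ⧸ range A.mulVecLin) →ₗ[k] ker A.mulVecLin) =
      finrank k (Fin (n - A.rank) × Fin (n - A.rank) → k) := by
    rw [Module.End.finrank_quotient_range_linearMap_ker, finrank_fin_fun,
      finrank_fintype_fun_eq_card, Fintype.card_prod, Fintype.card_fin, sq, Matrix.rank]
  obtain ⟨e⟩ := FiniteDimensional.nonempty_linearEquiv_of_finrank_eq hdim
  exact ⟨hG.equivAnnihilator.trans <| (toLinAlgEquiv'.toRingEquiv.annihilatorEquiv A).trans <|
    (Module.End.annihilatorEquivQuotientRangeToKer _).trans e.toEquiv⟩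

/-- For an `n×n` matrix `A` of index 1 over a field `k`, with `ν₁ = n - rank A`, the set of
G-Drazin inverses of `A` is in bijection with `k^(ν₁²)`. -/
theorem stmt15 {k : Type*} [Field k] {n : ℕ} (A : Matrix (Fin n) (Fin n) k)
    (h1 : A.rank = (A ^ 2).rank) (h2 : A.rank < n) :
    Nonempty
      ({X : Matrix (Fin n) (Fin n) k // A * X * A = A ∧ X * A = A * X} ≃
        (Fin (n - A.rank) × Fin (n - A.rank) → k)) :=
  stmt15_general A h1
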